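/- Let χ be a Dirichlet character mod k induced by a primitive character χ* mod r, and let m be an integer with (m,k)=1. Then the Gauss-type sum c_χ(m) = Σ_{h=1}^{k} χ(h)e(hm/k) satisfies c_χ(m) = conj(χ*)(m)·μ(k/r)·χ*(k/r)·τ(χ*). -/

import Mathlib

open Complex DirichletCharacter

/-- The Gauss-type sum c_χ(m) = Σ_{h=1}^{k} χ(h)e(hm/k). -/
noncomputable def cSum {k : ℕ} (χ : DirichletCharacter ℂ k) (m : ℤ) : ℂ :=
  ∑ h ∈ Finset.range k, χ (h : ZMod k) *
    Complex.exp (2 * Real.pi * Complex.I * h * m / k)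

/-!
For `(m, k) = 1` the substitution `h ↦ h m⁻¹` gives `c_χ(m) = conj (χ m) · c_χ(1)`, and
`χ(m) = χ*(m)`. For the induced character `c_χ(1) = ∑_{h < k, (h,k) = 1} χ*(h) e(h/k)`, and
detecting coprimality by `∑_{d ∣ (h,k)} μ(d)` gives `c_χ(1) = ∑_{d ∣ k} μ(d) χ*(d) τ_{k/d}`, where
`τ_n = ∑_{q < n} χ*(q) e(q/n)`. If `r ∣ n` and `r < n`, the `r`-periodicity of `χ*` factors `τ_n`
through the sum of all `n/r`-th roots of unity, so `τ_n = 0`. For `d ≠ k/r` either `(d, r) > 1`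
and `χ*(d) = 0`, or `r ∣ k/d ≠ r`; so only `d = k/r` survives, and `τ_r = τ(χ*)`.
-/

open Finset ArithmeticFunction
open scoped ArithmeticFunction.Moebius ComplexConjugate

lemma Finset.sum_range_eq_sum_zmod {M : Type*} [AddCommMonoid M] {k : ℕ} [NeZero k]
    (f : ZMod k → M) : ∑ h ∈ range k, f h = ∑ a : ZMod k, f a :=
  sum_nbij' (↑) ZMod.val (fun _ _ ↦ mem_univ _) (fun a _ ↦ mem_range.2 a.val_lt)
    (fun _ hh ↦ ZMod.val_cast_of_lt (mem_range.1 hh)) (fun a _ ↦ ZMod.natCast_zmod_val a)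
    (fun _ _ ↦ rfl)

lemma Finset.sum_range_mul_eq_sum_sum {M : Type*} [AddCommMonoid M] (g : ℕ → M) (r s : ℕ) :
    ∑ q ∈ range (r * s), g q = ∑ v ∈ range s, ∑ u ∈ range r, g (r * v + u) := by
  induction s with
  | zero => simp
  | succ s ih => rw [Nat.mul_succ, sum_range_add, ih, sum_range_succ]

lemma Finset.sum_filter_dvd_range {M : Type*} [AddCommMonoid M] (g : ℕ → M) {d k : ℕ}
    (hdk : d ∣ k) : ∑ h ∈ range k with d ∣ h, g h = ∑ q ∈ range (k / d), g (d * q) := by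
  obtain ⟨e, rfl⟩ := hdk
  rcases Nat.eq_zero_or_pos d with rfl | hd
  · simp
  have hmultiples : {h ∈ range (d * e) | d ∣ h} = (range e).image (d * ·) := by
    ext h
    simp only [mem_filter, mem_range, mem_image]
    constructor
    · rintro ⟨hlt, q, rfl⟩
      exact ⟨q, Nat.lt_of_mul_lt_mul_left hlt, rfl⟩
    · rintro ⟨q, hq, rfl⟩
      exact ⟨Nat.mul_lt_mul_of_pos_left hq hd, dvd_mul_right d q⟩
  rw [hmultiples, sum_image fun a _ b _ hab ↦ Nat.eq_of_mul_eq_mul_left hd hab,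
    Nat.mul_div_cancel_left e hd]

lemma sum_moebius_filter_dvd {R : Type*} [Ring R] {k : ℕ} (hk : k ≠ 0) (h : ℕ) :
    ∑ d ∈ k.divisors with d ∣ h, (μ d : R) = if h.Coprime k then 1 else 0 := by
  have hfilter : {d ∈ k.divisors | d ∣ h} = (k.gcd h).divisors := by
    rw [← Nat.divisors_filter_dvd_of_dvd hk (Nat.gcd_dvd_left k h)]
    exact filter_congr fun d hd ↦ by
      rw [Nat.dvd_gcd_iff, and_iff_right (Nat.dvd_of_mem_divisors hd)]
  have hsum := congrArg (· (k.gcd h)) (coe_moebius_mul_coe_zeta (R := R))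
  simp only [coe_mul_zeta_apply, intCoe_apply, one_apply] at hsum
  rw [hfilter, hsum, Nat.gcd_comm]

/-- `τ_n` of the header, for any `f`: unlike in `cSum`, the length `n` of the sum is not tied to
the modulus of a character. -/
noncomputable def expSum (f : ℕ → ℂ) (n : ℕ) : ℂ :=
  ∑ q ∈ range n, f q * exp (2 * Real.pi * I * q / n)

lemma expSum_eq_zero_of_periodic {f : ℕ → ℂ} {r n : ℕ} (hf : Function.Periodic f r)
    (hrn : r ∣ n) (hlt : r < n) : expSum f n = 0 := by
  obtain ⟨s, rfl⟩ := hrn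
  have hr : 0 < r := Nat.pos_of_ne_zero fun hr ↦ by simp [hr] at hlt
  have hs : 1 < s := (Nat.lt_mul_iff_one_lt_right hr).1 hlt
  set ζ := exp (2 * Real.pi * I / (r * s : ℕ))
  have hζ : IsPrimitiveRoot ζ (r * s) := isPrimitiveRoot_exp _ (by positivity)
  have hpow : ∀ q : ℕ, exp (2 * Real.pi * I * q / (r * s : ℕ)) = ζ ^ q := fun q ↦ by
    rw [← exp_nat_mul]
    ring_nf
  calc expSum f (r * s)
      = ∑ v ∈ range s, ∑ u ∈ range r, (ζ ^ r) ^ v * (f u * ζ ^ u) := by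
        rw [expSum, sum_range_mul_eq_sum_sum]
        refine sum_congr rfl fun v _ ↦ sum_congr rfl fun u _ ↦ ?_
        have hfu : f (r * v + u) = f u := by rw [add_comm, mul_comm]; exact hf.nat_mul v u
        rw [hpow, hfu]
        ring
    _ = (∑ v ∈ range s, (ζ ^ r) ^ v) * ∑ u ∈ range r, f u * ζ ^ u := by
        simp_rw [sum_mul, mul_sum]
    _ = 0 := by rw [(hζ.pow (by positivity) rfl).geom_sum_eq_zero hs, zero_mul]

lemma expSum_coprime_indicator {f : ℕ → ℂ} (hf : ∀ a b, f (a * b) = f a * f b) {k : ℕ}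
    (hk : k ≠ 0) :
    expSum (fun h ↦ if h.Coprime k then f h else 0) k =
      ∑ d ∈ k.divisors, μ d * f d * expSum f (k / d) := by
  unfold expSum
  calc _ = ∑ h ∈ range k, ∑ d ∈ k.divisors with d ∣ h,
        μ d * (f h * exp (2 * Real.pi * I * h / k)) := by
        refine sum_congr rfl fun h _ ↦ ?_
        rw [← sum_mul, sum_moebius_filter_dvd hk]
        simp only [ite_mul, one_mul, zero_mul]
    _ = ∑ d ∈ k.divisors, ∑ h ∈ range k with d ∣ h,
        μ d * (f h * exp (2 * Real.pi * I * h / k)) :=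
        sum_comm' fun h d ↦ by simp only [mem_filter]; tauto
    _ = ∑ d ∈ k.divisors, ∑ q ∈ range (k / d),
        μ d * (f (d * q) * exp (2 * Real.pi * I * (d * q : ℕ) / k)) :=
        sum_congr rfl fun d hd ↦ sum_filter_dvd_range _ (Nat.dvd_of_mem_divisors hd)
    _ = _ := sum_congr rfl fun d hd ↦ by
        obtain ⟨e, rfl⟩ := Nat.dvd_of_mem_divisors hd
        have hd0 : d ≠ 0 := left_ne_zero_of_mul hk
        rw [Nat.mul_div_cancel_left e (Nat.pos_of_ne_zero hd0), mul_sum]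
        refine sum_congr rfl fun q _ ↦ ?_
        have harg : 2 * Real.pi * I * (d * q : ℕ) / (d * e : ℕ) = 2 * Real.pi * I * q / e := by
          push_cast
          rw [mul_left_comm _ (d : ℂ), mul_div_mul_left _ _ (Nat.cast_ne_zero.2 hd0)]
        rw [hf, harg]
        ring

lemma cSum_one_eq_expSum {k : ℕ} (χ : DirichletCharacter ℂ k) :
    cSum χ 1 = expSum (fun h ↦ χ h) k := by
  simp [cSum, expSum]

lemma DirichletCharacter.changeLevel_natCast {r k : ℕ} (hrk : r ∣ k)
    (χ : DirichletCharacter ℂ r) (h : ℕ) :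
    changeLevel hrk χ h = if h.Coprime k then χ h else 0 := by
  split_ifs with hco
  · obtain ⟨u, hu⟩ := (ZMod.isUnit_iff_coprime h k).2 hco
    rw [← hu, changeLevel_eq_cast_of_dvd χ hrk u, hu, ZMod.cast_natCast hrk]
  · exact MulChar.map_nonunit _ (mt (ZMod.isUnit_iff_coprime h k).1 hco)

lemma cSum_changeLevel_one {r k : ℕ} (hrk : r ∣ k) (hk : k ≠ 0)
    (χ : DirichletCharacter ℂ r) :
    cSum (changeLevel hrk χ) 1 = μ (k / r) * χ (k / r : ℕ) * cSum χ 1 := by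
  have hχ (a b : ℕ) : χ ((a * b : ℕ) : ZMod r) = χ a * χ b := by rw [Nat.cast_mul, map_mul]
  have hperiodic : Function.Periodic (fun q : ℕ ↦ χ q) r := fun q ↦ by simp
  rw [cSum_one_eq_expSum, cSum_one_eq_expSum]
  simp_rw [changeLevel_natCast]
  rw [expSum_coprime_indicator hχ hk, sum_eq_single (k / r), Nat.div_div_self hrk hk]
  · intro d hd hne
    obtain ⟨hdk, -⟩ := Nat.mem_divisors.1 hd
    by_cases hco : d.Coprime r
    · have hrd : r ∣ k / d := hco.symm.dvd_of_dvd_mul_left (by rwa [Nat.mul_div_cancel' hdk])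
      have hle : r ≤ k / d :=
        Nat.le_of_dvd (Nat.div_pos (Nat.divisor_le hd) (Nat.pos_of_mem_divisors hd)) hrd
      have hne' : r ≠ k / d := fun h ↦ hne (by rw [h, Nat.div_div_self hdk hk])
      rw [expSum_eq_zero_of_periodic hperiodic hrd (lt_of_le_of_ne hle hne'), mul_zero]
    · rw [MulChar.map_nonunit _ (mt (ZMod.isUnit_iff_coprime d r).1 hco), mul_zero, zero_mul]
  · exact fun h ↦ absurd (Nat.mem_divisors.2 ⟨Nat.div_dvd_of_dvd hrk, hk⟩) h

lemma cSum_eq_gaussSum {k : ℕ} [NeZero k] (χ : DirichletCharacter ℂ k) (m : ℤ) :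
    cSum χ m = gaussSum χ (ZMod.stdAddChar.mulShift (m : ZMod k)) := by
  rw [cSum, gaussSum, ← sum_range_eq_sum_zmod]
  refine sum_congr rfl fun h _ ↦ ?_
  rw [AddChar.mulShift_apply, ← Int.cast_natCast h, ← Int.cast_mul, ZMod.stdAddChar_coe]
  push_cast
  ring_nf

lemma cSum_eq_conj_mul_cSum_one {k : ℕ} [NeZero k] (χ : DirichletCharacter ℂ k) {m : ℤ}
    (hm : IsCoprime m k) : cSum χ m = conj (χ m) * cSum χ 1 := by
  rw [cSum_eq_gaussSum, cSum_eq_gaussSum, Int.cast_one, AddChar.mulShift_one,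
    ← ZMod.coe_unitOfIsCoprime m hm, gaussSum_mulShift_eq, starRingEnd_apply,
    MulChar.star_apply']

theorem cSum_eq_of_induced_coprime_general {r k : ℕ} (hrk : r ∣ k)
    (χstar : DirichletCharacter ℂ r)
    (χ : DirichletCharacter ℂ k) (hind : χ = changeLevel hrk χstar)
    (m : ℤ) (hm : IsCoprime m (k : ℤ)) :
    cSum χ m =
      (starRingEnd ℂ) (χstar ((m : ℤ) : ZMod r)) *
        (ArithmeticFunction.moebius (k / r) : ℂ) * χstar ((k / r : ℕ) : ZMod r) *
        cSum χstar 1 := by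
  rcases eq_or_ne k 0 with rfl | hk
  · simp [cSum]
  have : NeZero k := ⟨hk⟩
  subst hind
  rw [cSum_eq_conj_mul_cSum_one _ hm, changeLevel_eq_cast_of_dvd' χstar hrk hm,
    cSum_changeLevel_one hrk hk]
  ring

/-- If χ mod k is induced by the primitive character χ* mod r and (m,k) = 1, then
c_χ(m) = conj(χ*)(m)·μ(k/r)·χ*(k/r)·τ(χ*). -/
theorem cSum_eq_of_induced_coprime {r k : ℕ} (hrk : r ∣ k)
    (χstar : DirichletCharacter ℂ r) (hprim : χstar.IsPrimitive)
    (χ : DirichletCharacter ℂ k) (hind : χ = changeLevel hrk χstar)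
    (m : ℤ) (hm : IsCoprime m (k : ℤ)) :
    cSum χ m =
      (starRingEnd ℂ) (χstar ((m : ℤ) : ZMod r)) *
        (ArithmeticFunction.moebius (k / r) : ℂ) * χstar ((k / r : ℕ) : ZMod r) *
        cSum χstar 1 :=
  cSum_eq_of_induced_coprime_general hrk χstar χ hind m hm
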